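/- arXiv:1808.08641 — 3 statements merged into one kernel-verified Lean document; each statement's English description precedes it below -/
import Mathlib

section
/- Let B(x,r) denote the spherical cap of geodesic radius r centered at x on the unit sphere S^{d-1} (d ≥ 2), so |B(x,r)| = ω_{d-1} ∫_0^r sin^{d-2}(v) dv where ω_{d-1} is the surface area of S^{d-2}. Then for all 0 < r₂ ≤ r₁ ≤ π and all x₁, x₂ in S^{d-1}, |B(x₁,r₁)|/|B(x₂,r₂)| ≤ (r₁/r₂)^{d-1}. -/
/-!
Substituting `v = c u` with `c = r₁ / r₂ ≥ 1` turns `∫₀^{r₁} sin^n` into `c ∫₀^{r₂} sin^n (c u)`,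
and concavity of `sin` on `[0, π]` together with `sin 0 = 0` gives `sin (c u) ≤ c sin u`
whenever `c u ≤ π`. Hence `∫₀^{r₁} sin^n ≤ c^(n+1) ∫₀^{r₂} sin^n`, and `ω` cancels.
-/

open MeasureTheory Set

theorem ConcaveOn.smul_le_apply_smul {E : Type*} [AddCommGroup E] [Module ℝ E] {s : Set E}
    {f : E → ℝ} (hf : ConcaveOn ℝ s f) (h₀ : (0 : E) ∈ s) (hf₀ : f 0 = 0) {x : E}
    (hx : x ∈ s) {t : ℝ} (ht₀ : 0 ≤ t) (ht₁ : t ≤ 1) : t • f x ≤ f (t • x) := by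
  simpa [hf₀] using hf.2 hx h₀ ht₀ (sub_nonneg.2 ht₁) (add_sub_cancel t 1)

theorem intervalIntegral.integral_scale_le_pow_succ_mul {f : ℝ → ℝ} (hf : Continuous f)
    {c r : ℝ} (hc : 0 ≤ c) (hr : 0 ≤ r) (n : ℕ)
    (hfc : ∀ u ∈ Icc 0 r, f (c * u) ≤ c ^ n * f u) :
    ∫ v in (0 : ℝ)..c * r, f v ≤ c ^ (n + 1) * ∫ v in (0 : ℝ)..r, f v := by
  have hsubst : ∫ v in (0 : ℝ)..c * r, f v = c * ∫ u in (0 : ℝ)..r, f (c * u) := by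
    simpa only [mul_zero, smul_eq_mul] using
      (smul_integral_comp_mul_left f c (a := 0) (b := r)).symm
  have hmono : ∫ u in (0 : ℝ)..r, f (c * u) ≤ c ^ n * ∫ u in (0 : ℝ)..r, f u :=
    integral_const_mul (c ^ n) f ▸ integral_mono_on hr
      ((hf.comp (continuous_const_mul c)).intervalIntegrable _ _)
      ((continuous_const.mul hf).intervalIntegrable _ _) hfc
  calc ∫ v in (0 : ℝ)..c * r, f v
      ≤ c * (c ^ n * ∫ u in (0 : ℝ)..r, f u) := by
        rw [hsubst]; exact mul_le_mul_of_nonneg_left hmono hc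
    _ = c ^ (n + 1) * ∫ u in (0 : ℝ)..r, f u := by ring

namespace Real

theorem sin_mul_le_mul_sin {c u : ℝ} (hc : 1 ≤ c) (hu : 0 ≤ u) (hcu : c * u ≤ π) :
    sin (c * u) ≤ c * sin u := by
  have hc₀ : 0 < c := one_pos.trans_le hc
  have h := strictConcaveOn_sin_Icc.concaveOn.smul_le_apply_smul ⟨le_rfl, pi_pos.le⟩ sin_zero
    ⟨mul_nonneg hc₀.le hu, hcu⟩ (inv_nonneg.2 hc₀.le) (inv_le_one_of_one_le₀ hc)
  rw [smul_eq_mul, smul_eq_mul, inv_mul_cancel_left₀ hc₀.ne'] at h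
  rwa [inv_mul_le_iff₀ hc₀] at h

theorem integral_sin_pow_pos_of_le_pi {r : ℝ} (hr₀ : 0 < r) (hr : r ≤ π) (n : ℕ) :
    0 < ∫ v in (0 : ℝ)..r, sin v ^ n :=
  intervalIntegral.intervalIntegral_pos_of_pos_on
    ((continuous_sin.pow n).intervalIntegrable _ _)
    (fun _ hu => pow_pos (sin_pos_of_pos_of_lt_pi hu.1 (hu.2.trans_le hr)) n) hr₀

theorem integral_sin_pow_le_div_pow_mul {r₁ r₂ : ℝ} (hr₂ : 0 < r₂) (hr₂₁ : r₂ ≤ r₁)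
    (hr₁ : r₁ ≤ π) (n : ℕ) :
    ∫ v in (0 : ℝ)..r₁, sin v ^ n ≤ (r₁ / r₂) ^ (n + 1) * ∫ v in (0 : ℝ)..r₂, sin v ^ n := by
  set c := r₁ / r₂
  have hc : 1 ≤ c := (one_le_div hr₂).2 hr₂₁
  have hc₀ : 0 ≤ c := zero_le_one.trans hc
  have hcr : c * r₂ = r₁ := div_mul_cancel₀ _ hr₂.ne'
  rw [← hcr]
  refine intervalIntegral.integral_scale_le_pow_succ_mul (f := fun v => sin v ^ n)
    (by fun_prop) hc₀ hr₂.le n fun u hu => ?_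
  have hcu : c * u ≤ π := (mul_le_mul_of_nonneg_left hu.2 hc₀).trans (hcr ▸ hr₁)
  rw [← mul_pow]
  exact pow_le_pow_left₀ (sin_nonneg_of_nonneg_of_le_pi (mul_nonneg hc₀ hu.1) hcu)
    (sin_mul_le_mul_sin hc hu.1 hcu) n

end Real

theorem stmt4_general (d : ℕ) (hd : 2 ≤ d) (ω : ℝ) (hω : 0 < ω)
    (r₁ r₂ : ℝ) (hr₂ : 0 < r₂) (hr₂₁ : r₂ ≤ r₁) (hr₁ : r₁ ≤ Real.pi) :
    (ω * ∫ v in (0:ℝ)..r₁, Real.sin v ^ (d - 2)) /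
        (ω * ∫ v in (0:ℝ)..r₂, Real.sin v ^ (d - 2))
      ≤ (r₁ / r₂) ^ (d - 1) := by
  obtain ⟨n, rfl⟩ := Nat.exists_eq_add_of_le' hd
  rw [Nat.add_sub_cancel, show n + 2 - 1 = n + 1 by omega, mul_div_mul_left _ _ hω.ne',
    div_le_iff₀ (Real.integral_sin_pow_pos_of_le_pi hr₂ (hr₂₁.trans hr₁) n)]
  exact Real.integral_sin_pow_le_div_pow_mul hr₂ hr₂₁ hr₁ n

theorem stmt4 (d : ℕ) (hd : 2 ≤ d) (ω : ℝ) (hω : 0 < ω)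
    (x₁ x₂ : EuclideanSpace ℝ (Fin d))
    (hx₁ : x₁ ∈ Metric.sphere (0 : EuclideanSpace ℝ (Fin d)) 1)
    (hx₂ : x₂ ∈ Metric.sphere (0 : EuclideanSpace ℝ (Fin d)) 1)
    (r₁ r₂ : ℝ) (hr₂ : 0 < r₂) (hr₂₁ : r₂ ≤ r₁) (hr₁ : r₁ ≤ Real.pi) :
    (ω * ∫ v in (0:ℝ)..r₁, Real.sin v ^ (d - 2)) /
        (ω * ∫ v in (0:ℝ)..r₂, Real.sin v ^ (d - 2))
      ≤ (r₁ / r₂) ^ (d - 1) :=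
  stmt4_general d hd ω hω r₁ r₂ hr₂ hr₂₁ hr₁
end

section
/- Let 0 < p < ∞ and let Y be a finite collection of spherical caps on S^{d-1}, where each cap B ∈ Y has measure |B| > 0, and assume the caps come in dyadic generations: caps in generation j have radius γ·2^{-j+1} for a fixed 0 < γ < 1 and centers forming a maximal (γ·2^{-j+1})-net of that generation. Then ‖ Σ_{B∈Y} |B|^{-1/p} 𝟙_B ‖_{L^p(S^{d-1})} ≤ c · (#Y)^{1/p}, with c depending only on d and p. -/
open MeasureTheory ENNReal

/-- Geodesic distance on the unit sphere: `ρ(x,y) = arccos (x · y)`. -/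
noncomputable def geodist {d : ℕ} (x y : EuclideanSpace ℝ (Fin d)) : ℝ :=
  Real.arccos (inner ℝ x y : ℝ)

/-- The open spherical cap `B(ζ,r) = {x ∈ S^{d-1} : ρ(ζ,x) < r}`. -/
def cap {d : ℕ} (ζ : EuclideanSpace ℝ (Fin d)) (r : ℝ) : Set (EuclideanSpace ℝ (Fin d)) :=
  {x | x ∈ Metric.sphere (0 : EuclideanSpace ℝ (Fin d)) 1 ∧ geodist ζ x < r}

/-- The surface measure on the unit sphere: the `(d-1)`-dimensional Hausdorff measure. -/
noncomputable def sphMeasure (d : ℕ) : Measure (EuclideanSpace ℝ (Fin d)) :=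
  Measure.hausdorffMeasure ((d : ℝ) - 1)

/-!
Fix a point `x` of the sphere. The caps of generation `j` through `x` have `r_j`-separated centres
within distance `r_j` of `x`, so a volume count bounds their number by `5 ^ d`. The measure of a cap
of radius `r` is comparable to `r ^ (d - 1)`: orthogonal projection onto the tangent hyperplane is
`1`-Lipschitz, and on small caps its inverse (the graph map `y ↦ √(1 - ‖y‖²) ζ + y`) is
`2`-Lipschitz. Hence the weights `|B| ^ (-1/p)` of the caps through `x` grow geometrically with the
generation, and their sum is at most a constant times the weight of the smallest cap `B_x` through
`x`. Raising to the power `p` gives `≲ |B_x|⁻¹ ≤ ∑ |B|⁻¹ 𝟙_B x`, whose integral is at most `#Y`.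
-/

open Metric Real Module
open scoped NNReal InnerProductSpace

section SphereChart

variable {E : Type*} [NormedAddCommGroup E] [InnerProductSpace ℝ E] {ζ : E}

lemma abs_inner_le_one {x y : E} (hx : ‖x‖ = 1) (hy : ‖y‖ = 1) : |⟪x, y⟫_ℝ| ≤ 1 := by
  simpa [hx, hy] using abs_real_inner_le_norm x y

noncomputable def sphereLift (ζ : E) (y : (ℝ ∙ ζ)ᗮ) : E := √(1 - ‖y‖ ^ 2) • ζ + y

lemma inner_coe_orthogonal_span_singleton (y : (ℝ ∙ ζ)ᗮ) : ⟪ζ, (y : E)⟫_ℝ = 0 :=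
  Submodule.mem_orthogonal_singleton_iff_inner_right.mp y.2

lemma coe_orthogonalProjectionOnto_orthogonal_span (hζ : ‖ζ‖ = 1) (x : E) :
    ((ℝ ∙ ζ)ᗮ.orthogonalProjectionOnto x : E) = x - ⟪ζ, x⟫_ℝ • ζ := by
  simp [Submodule.orthogonalProjectionOnto_orthogonal, Submodule.starProjection_unit_singleton ℝ hζ]

lemma norm_orthogonalProjectionOnto_orthogonal_span_sq (hζ : ‖ζ‖ = 1) (x : E) :
    ‖(ℝ ∙ ζ)ᗮ.orthogonalProjectionOnto x‖ ^ 2 = ‖x‖ ^ 2 - ⟪ζ, x⟫_ℝ ^ 2 := by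
  rw [Submodule.coe_norm, coe_orthogonalProjectionOnto_orthogonal_span hζ, norm_sub_sq_real,
    real_inner_smul_right, real_inner_comm, norm_smul, hζ, Real.norm_eq_abs, mul_one, sq_abs]
  ring

lemma inner_sphereLift (hζ : ‖ζ‖ = 1) (y : (ℝ ∙ ζ)ᗮ) :
    ⟪ζ, sphereLift ζ y⟫_ℝ = √(1 - ‖y‖ ^ 2) := by
  rw [sphereLift, inner_add_right, real_inner_smul_right, real_inner_self_eq_norm_sq, hζ,
    inner_coe_orthogonal_span_singleton]
  ring

lemma norm_sphereLift (hζ : ‖ζ‖ = 1) {y : (ℝ ∙ ζ)ᗮ} (hy : ‖y‖ ≤ 1) : ‖sphereLift ζ y‖ = 1 := by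
  have h : ‖sphereLift ζ y‖ ^ 2 = 1 := by
    rw [sphereLift, norm_add_sq_real, real_inner_smul_left, inner_coe_orthogonal_span_singleton,
      norm_smul, hζ, Real.norm_eq_abs, abs_of_nonneg (Real.sqrt_nonneg _), Submodule.norm_coe,
      mul_one, mul_zero, mul_zero, add_zero, Real.sq_sqrt (by nlinarith [norm_nonneg y])]
    ring
  exact (pow_eq_one_iff_of_nonneg (norm_nonneg _) two_ne_zero).1 h

lemma orthogonalProjectionOnto_sphereLift (hζ : ‖ζ‖ = 1) (y : (ℝ ∙ ζ)ᗮ) :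
    (ℝ ∙ ζ)ᗮ.orthogonalProjectionOnto (sphereLift ζ y) = y := by
  ext
  rw [coe_orthogonalProjectionOnto_orthogonal_span hζ, inner_sphereLift hζ, sphereLift,
    add_sub_cancel_left]

lemma sphereLift_orthogonalProjectionOnto (hζ : ‖ζ‖ = 1) {x : E} (hx : ‖x‖ = 1)
    (hζx : 0 ≤ ⟪ζ, x⟫_ℝ) : sphereLift ζ ((ℝ ∙ ζ)ᗮ.orthogonalProjectionOnto x) = x := by
  rw [sphereLift, norm_orthogonalProjectionOnto_orthogonal_span_sq hζ, hx,
    coe_orthogonalProjectionOnto_orthogonal_span hζ]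
  have h : √(1 - (1 - ⟪ζ, x⟫_ℝ ^ 2)) = ⟪ζ, x⟫_ℝ := by
    rw [sub_sub_self, Real.sqrt_sq hζx]
  rw [one_pow, h, add_sub_cancel]

lemma abs_sqrt_one_sub_sq_sub_le {a b : ℝ} (ha : |a| ≤ 1 / 2) (hb : |b| ≤ 1 / 2) :
    |√(1 - a ^ 2) - √(1 - b ^ 2)| ≤ |a - b| := by
  have ha2 : a ^ 2 ≤ 1 / 4 := by nlinarith [sq_abs a, abs_nonneg a]
  have hb2 : b ^ 2 ≤ 1 / 4 := by nlinarith [sq_abs b, abs_nonneg b]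
  have hs : 1 / 2 ≤ √(1 - a ^ 2) := Real.le_sqrt_of_sq_le (by linarith)
  have ht : 1 / 2 ≤ √(1 - b ^ 2) := Real.le_sqrt_of_sq_le (by linarith)
  have key : |√(1 - a ^ 2) - √(1 - b ^ 2)| * (√(1 - a ^ 2) + √(1 - b ^ 2)) = |a - b| * |a + b| := by
    rw [← abs_of_pos (by linarith : 0 < √(1 - a ^ 2) + √(1 - b ^ 2)), ← abs_mul, ← abs_mul,
      ← abs_neg]
    congr 1
    nlinarith [Real.sq_sqrt (by linarith : (0 : ℝ) ≤ 1 - a ^ 2),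
      Real.sq_sqrt (by linarith : (0 : ℝ) ≤ 1 - b ^ 2)]
  have hab : |a + b| ≤ 1 := (abs_add_le a b).trans (by linarith)
  nlinarith [abs_nonneg (√(1 - a ^ 2) - √(1 - b ^ 2)), abs_nonneg (a - b)]

lemma lipschitzOnWith_sphereLift (hζ : ‖ζ‖ = 1) :
    LipschitzOnWith 2 (sphereLift ζ) (closedBall 0 (1 / 2)) := by
  refine LipschitzOnWith.of_dist_le_mul fun y hy z hz => ?_
  rw [mem_closedBall, dist_zero_right] at hy hz
  set u := √(1 - ‖y‖ ^ 2) - √(1 - ‖z‖ ^ 2)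
  have hu : |u| ≤ ‖y - z‖ :=
    (abs_sqrt_one_sub_sq_sub_le (by rwa [abs_norm]) (by rwa [abs_norm])).trans
      (abs_norm_sub_norm_le y z)
  have hsq : dist (sphereLift ζ y) (sphereLift ζ z) ^ 2 = u ^ 2 + dist y z ^ 2 := by
    have : sphereLift ζ y - sphereLift ζ z = u • ζ + ((y - z : (ℝ ∙ ζ)ᗮ) : E) := by
      simp only [sphereLift, u, sub_smul, Submodule.coe_sub]; abel
    rw [dist_eq_norm, this, norm_add_sq_real, real_inner_smul_left,
      inner_coe_orthogonal_span_singleton, norm_smul, hζ, Real.norm_eq_abs, Submodule.norm_coe,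
      dist_eq_norm, mul_one, mul_zero, mul_zero, add_zero, sq_abs]
  have h2 : dist (sphereLift ζ y) (sphereLift ζ z) ^ 2 ≤ (2 * dist y z) ^ 2 := by
    rw [hsq, dist_eq_norm]
    nlinarith [sq_abs u, abs_nonneg u, norm_nonneg (y - z)]
  rw [NNReal.coe_ofNat]
  exact (pow_le_pow_iff_left₀ dist_nonneg (by positivity) two_ne_zero).1 h2

end SphereChart

section Geodesic

variable {d : ℕ} {x y ζ : EuclideanSpace ℝ (Fin d)}

lemma cos_geodist (hx : ‖x‖ = 1) (hy : ‖y‖ = 1) : cos (geodist x y) = ⟪x, y⟫_ℝ :=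
  Real.cos_arccos (abs_le.1 (abs_inner_le_one hx hy)).1 (abs_le.1 (abs_inner_le_one hx hy)).2

lemma geodist_nonneg (x y : EuclideanSpace ℝ (Fin d)) : 0 ≤ geodist x y := Real.arccos_nonneg _

lemma geodist_le_pi (x y : EuclideanSpace ℝ (Fin d)) : geodist x y ≤ π := Real.arccos_le_pi _

lemma geodist_self (hx : ‖x‖ = 1) : geodist x x = 0 := by
  rw [geodist, real_inner_self_eq_norm_sq, hx, one_pow, Real.arccos_one]

lemma dist_eq_two_mul_sin_half_geodist (hx : ‖x‖ = 1) (hy : ‖y‖ = 1) :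
    dist x y = 2 * sin (geodist x y / 2) := by
  have hsin : 0 ≤ sin (geodist x y / 2) :=
    Real.sin_nonneg_of_nonneg_of_le_pi (by linarith [geodist_nonneg x y])
      (by linarith [geodist_le_pi x y, Real.pi_pos])
  have hsq : dist x y ^ 2 = (2 * sin (geodist x y / 2)) ^ 2 := by
    have h : cos (2 * (geodist x y / 2)) = 1 - 2 * sin (geodist x y / 2) ^ 2 := by
      rw [Real.cos_two_mul, Real.cos_sq']; ring
    rw [show 2 * (geodist x y / 2) = geodist x y by ring, cos_geodist hx hy] at h
    rw [dist_eq_norm, norm_sub_sq_real, hx, hy, mul_pow]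
    linarith
  exact (pow_left_inj₀ dist_nonneg (by positivity) two_ne_zero).1 hsq

lemma dist_le_geodist (hx : ‖x‖ = 1) (hy : ‖y‖ = 1) : dist x y ≤ geodist x y := by
  rw [dist_eq_two_mul_sin_half_geodist hx hy]
  linarith [Real.sin_le (by linarith [geodist_nonneg x y] : 0 ≤ geodist x y / 2)]

lemma two_div_pi_mul_geodist_le_dist (hx : ‖x‖ = 1) (hy : ‖y‖ = 1) :
    2 / π * geodist x y ≤ dist x y := by
  rw [dist_eq_two_mul_sin_half_geodist hx hy]
  have := Real.mul_le_sin (by linarith [geodist_nonneg x y] : 0 ≤ geodist x y / 2)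
    (by linarith [geodist_le_pi x y])
  linarith

lemma continuous_geodist (ζ : EuclideanSpace ℝ (Fin d)) : Continuous (geodist ζ) :=
  (continuous_const.inner continuous_id).arccos

lemma measurableSet_cap (ζ : EuclideanSpace ℝ (Fin d)) (r : ℝ) : MeasurableSet (cap ζ r) :=
  isClosed_sphere.measurableSet.inter (measurableSet_lt (continuous_geodist ζ).measurable
    measurable_const)

lemma sin_geodist (hζ : ‖ζ‖ = 1) (hx : ‖x‖ = 1) :
    sin (geodist ζ x) = ‖(ℝ ∙ ζ)ᗮ.orthogonalProjectionOnto x‖ := by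
  rw [geodist, Real.sin_arccos, ← Real.sqrt_sq (norm_nonneg _),
    norm_orthogonalProjectionOnto_orthogonal_span_sq hζ, hx, one_pow]

end Geodesic

section CapChart

variable {d : ℕ} {ζ : EuclideanSpace ℝ (Fin d)} {r : ℝ}
  {F : Type*} [NormedAddCommGroup F] [InnerProductSpace ℝ F]

lemma ball_sin_subset_image_cap (hζ : ‖ζ‖ = 1) (e : (ℝ ∙ ζ)ᗮ ≃ₗᵢ[ℝ] F) (hr₀ : 0 ≤ r)
    (hr : r ≤ π / 2) :
    ball 0 (sin r) ⊆ (fun x => e ((ℝ ∙ ζ)ᗮ.orthogonalProjectionOnto x)) '' cap ζ r := by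
  intro w hw
  rw [mem_ball, dist_zero_right] at hw
  set y := e.symm w
  have hy : ‖y‖ < sin r := by rwa [LinearIsometryEquiv.norm_map]
  have hy1 : ‖y‖ ≤ 1 := hy.le.trans (Real.sin_le_one r)
  have hx : ‖sphereLift ζ y‖ = 1 := norm_sphereLift hζ hy1
  refine ⟨sphereLift ζ y, ⟨mem_sphere_zero_iff_norm.2 hx, ?_⟩, ?_⟩
  · have hθ : geodist ζ (sphereLift ζ y) ≤ π / 2 := by
      rw [geodist, Real.arccos_le_pi_div_two, inner_sphereLift hζ]
      exact Real.sqrt_nonneg _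
    by_contra! h
    have := Real.sin_le_sin_of_le_of_le_pi_div_two (by linarith [Real.pi_pos]) hθ h
    rw [sin_geodist hζ hx, orthogonalProjectionOnto_sphereLift hζ] at this
    linarith
  · simp only [orthogonalProjectionOnto_sphereLift hζ, y, LinearIsometryEquiv.apply_symm_apply]

lemma cap_subset_image_closedBall (hζ : ‖ζ‖ = 1) (e : (ℝ ∙ ζ)ᗮ ≃ₗᵢ[ℝ] F) (hr : r ≤ π / 2) :
    cap ζ r ⊆ (fun w => sphereLift ζ (e.symm w)) '' closedBall 0 r := by
  rintro x ⟨hxS, hxr⟩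
  have hx : ‖x‖ = 1 := mem_sphere_zero_iff_norm.1 hxS
  have hθ := geodist_nonneg ζ x
  refine ⟨e ((ℝ ∙ ζ)ᗮ.orthogonalProjectionOnto x), ?_, ?_⟩
  · rw [mem_closedBall, dist_zero_right, LinearIsometryEquiv.norm_map, ← sin_geodist hζ hx]
    linarith [Real.sin_le hθ]
  · have hζx : 0 ≤ ⟪ζ, x⟫_ℝ := Real.arccos_le_pi_div_two.1 (hxr.le.trans hr)
    simp only [LinearIsometryEquiv.symm_apply_apply, sphereLift_orthogonalProjectionOnto hζ hx hζx]

end CapChart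

section CapMeasure

variable {k : ℕ} {ζ : EuclideanSpace ℝ (Fin (k + 1))} {r : ℝ}

lemma sphMeasure_succ (k : ℕ) : sphMeasure (k + 1) = μH[(k : ℝ)] := by
  rw [sphMeasure]; push_cast; ring_nf

lemma nonempty_orthogonal_span_linearIsometryEquiv (hζ : ζ ≠ 0) :
    Nonempty ((ℝ ∙ ζ)ᗮ ≃ₗᵢ[ℝ] EuclideanSpace ℝ (Fin k)) := by
  have : Fact (finrank ℝ (EuclideanSpace ℝ (Fin (k + 1))) = k + 1) :=
    ⟨finrank_euclideanSpace_fin⟩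
  exact ⟨(OrthonormalBasis.fromOrthogonalSpanSingleton k hζ).repr⟩

lemma ofReal_sin_pow_mul_le_sphMeasure_cap (hζ : ‖ζ‖ = 1) (hr₀ : 0 < r) (hr : r ≤ π / 2) :
    ENNReal.ofReal (sin r ^ k) * μH[(k : ℝ)] (ball (0 : EuclideanSpace ℝ (Fin k)) 1)
      ≤ sphMeasure (k + 1) (cap ζ r) := by
  obtain ⟨e⟩ := nonempty_orthogonal_span_linearIsometryEquiv (k := k)
    (ne_zero_of_norm_ne_zero (hζ.symm ▸ one_ne_zero))
  have hsin : 0 < sin r := Real.sin_pos_of_pos_of_lt_pi hr₀ (by linarith [Real.pi_pos])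
  have hlip : LipschitzWith 1 fun x => e ((ℝ ∙ ζ)ᗮ.orthogonalProjectionOnto x) := by
    have := e.lipschitz.comp (ℝ ∙ ζ)ᗮ.lipschitzWith_orthogonalProjectionOnto
    rwa [mul_one] at this
  calc ENNReal.ofReal (sin r ^ k) * μH[(k : ℝ)] (ball (0 : EuclideanSpace ℝ (Fin k)) 1)
      = μH[(k : ℝ)] (ball (0 : EuclideanSpace ℝ (Fin k)) (sin r)) := by
        rw [Measure.addHaar_ball_of_pos _ _ hsin, finrank_euclideanSpace_fin]
    _ ≤ μH[(k : ℝ)] ((fun x => e ((ℝ ∙ ζ)ᗮ.orthogonalProjectionOnto x)) '' cap ζ r) :=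
        measure_mono (ball_sin_subset_image_cap hζ e hr₀.le hr)
    _ ≤ sphMeasure (k + 1) (cap ζ r) := by
        simpa [sphMeasure_succ] using hlip.hausdorffMeasure_image_le (Nat.cast_nonneg k) (cap ζ r)

lemma sphMeasure_cap_le_of_le_half (hζ : ‖ζ‖ = 1) (hr₀ : 0 ≤ r) (hr : r ≤ 1 / 2) :
    sphMeasure (k + 1) (cap ζ r)
      ≤ 2 ^ k * (ENNReal.ofReal (r ^ k) * μH[(k : ℝ)] (ball (0 : EuclideanSpace ℝ (Fin k)) 1)) := by
  obtain ⟨e⟩ := nonempty_orthogonal_span_linearIsometryEquiv (k := k)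
    (ne_zero_of_norm_ne_zero (hζ.symm ▸ one_ne_zero))
  have hlip : LipschitzOnWith 2 (fun w => sphereLift ζ (e.symm w)) (closedBall 0 r) := by
    have := (lipschitzOnWith_sphereLift hζ).comp e.symm.lipschitz.lipschitzOnWith
      fun w hw => by
        simpa [LinearIsometryEquiv.norm_map] using (mem_closedBall_zero_iff.1 hw).trans hr
    rwa [mul_one] at this
  calc sphMeasure (k + 1) (cap ζ r)
      ≤ μH[(k : ℝ)] ((fun w => sphereLift ζ (e.symm w)) '' closedBall 0 r) := by
        rw [sphMeasure_succ]
        exact measure_mono (cap_subset_image_closedBall hζ e (by linarith [Real.pi_gt_three]))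
    _ ≤ 2 ^ k * μH[(k : ℝ)] (closedBall (0 : EuclideanSpace ℝ (Fin k)) r) := by
        simpa using hlip.hausdorffMeasure_image_le (Nat.cast_nonneg k)
    _ = 2 ^ k * (ENNReal.ofReal (r ^ k) * μH[(k : ℝ)] (ball (0 : EuclideanSpace ℝ (Fin k)) 1)) := by
        rw [Measure.addHaar_closedBall _ _ hr₀, finrank_euclideanSpace_fin]

lemma measure_unitBall_ne_zero (k : ℕ) :
    μH[(k : ℝ)] (ball (0 : EuclideanSpace ℝ (Fin k)) 1) ≠ 0 :=
  (measure_ball_pos _ _ one_pos).ne'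

lemma measure_unitBall_ne_top (k : ℕ) :
    μH[(k : ℝ)] (ball (0 : EuclideanSpace ℝ (Fin k)) 1) ≠ ⊤ :=
  measure_ball_lt_top.ne

lemma sphMeasure_sphere_ne_top (k : ℕ) :
    sphMeasure (k + 1) (sphere (0 : EuclideanSpace ℝ (Fin (k + 1))) 1) ≠ ⊤ := by
  obtain ⟨t, ht, hcover⟩ :=
    (isCompact_sphere (0 : EuclideanSpace ℝ (Fin (k + 1))) 1).elim_nhds_subcover
      (fun x => {y | geodist x y < 1 / 2}) fun x hx =>
        (isOpen_lt (continuous_geodist x) continuous_const).mem_nhds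
          (by simp [geodist_self (mem_sphere_zero_iff_norm.1 hx)])
  have hsub : sphere (0 : EuclideanSpace ℝ (Fin (k + 1))) 1 ⊆ ⋃ x ∈ t, cap x (1 / 2) := by
    intro y hy
    obtain ⟨x, hxt, hxy⟩ := Set.mem_iUnion₂.1 (hcover hy)
    exact Set.mem_iUnion₂.2 ⟨x, hxt, hy, hxy⟩
  refine ne_top_of_le_ne_top ?_ ((measure_mono hsub).trans (measure_biUnion_finset_le t _))
  refine ENNReal.sum_ne_top.2 fun x hx => ne_top_of_le_ne_top ?_
    (sphMeasure_cap_le_of_le_half (mem_sphere_zero_iff_norm.1 (ht x hx)) (by norm_num) le_rfl)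
  exact ENNReal.mul_ne_top (by simp) (ENNReal.mul_ne_top ENNReal.ofReal_ne_top
    (measure_unitBall_ne_top k))

lemma exists_sphMeasure_cap_le (k : ℕ) :
    ∃ B : ℝ≥0∞, B ≠ 0 ∧ B ≠ ⊤ ∧ ∀ (ζ : EuclideanSpace ℝ (Fin (k + 1))) (r : ℝ), ‖ζ‖ = 1 →
      0 < r → sphMeasure (k + 1) (cap ζ r) ≤ B * ENNReal.ofReal (r ^ k) := by
  set V := μH[(k : ℝ)] (ball (0 : EuclideanSpace ℝ (Fin k)) 1)
  set S := sphMeasure (k + 1) (sphere (0 : EuclideanSpace ℝ (Fin (k + 1))) 1)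
  refine ⟨max (2 ^ k * V) (S * 2 ^ k), ?_, ?_, fun ζ r hζ hr => ?_⟩
  · exact (lt_max_of_lt_left (ENNReal.mul_pos (by simp) (measure_unitBall_ne_zero k))).ne'
  · exact max_ne_top (ENNReal.mul_ne_top (by simp) (measure_unitBall_ne_top k))
      (ENNReal.mul_ne_top (sphMeasure_sphere_ne_top k) (by simp))
  rcases le_or_gt r (1 / 2) with hr2 | hr2
  · calc sphMeasure (k + 1) (cap ζ r) ≤ 2 ^ k * (ENNReal.ofReal (r ^ k) * V) :=
          sphMeasure_cap_le_of_le_half hζ hr.le hr2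
      _ = 2 ^ k * V * ENNReal.ofReal (r ^ k) := by ring
      _ ≤ _ := by gcongr; exact le_max_left _ _
  · calc sphMeasure (k + 1) (cap ζ r) ≤ S * 1 := by
          rw [mul_one]; exact measure_mono fun x hx => hx.1
      _ ≤ S * ENNReal.ofReal ((2 * r) ^ k) := by
          gcongr
          rw [← ENNReal.ofReal_one]
          exact ENNReal.ofReal_le_ofReal (one_le_pow₀ (by linarith))
      _ = S * 2 ^ k * ENNReal.ofReal (r ^ k) := by
          rw [mul_pow, ENNReal.ofReal_mul (by positivity), mul_assoc]
          norm_num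
      _ ≤ _ := by gcongr; exact le_max_right _ _

lemma ofReal_div_pi_pow_mul_le_sphMeasure_cap (hζ : ‖ζ‖ = 1) (hr₀ : 0 < r) (hr : r ≤ π) :
    ENNReal.ofReal ((r / π) ^ k) * μH[(k : ℝ)] (ball (0 : EuclideanSpace ℝ (Fin k)) 1)
      ≤ sphMeasure (k + 1) (cap ζ r) := by
  have hπ := Real.pi_pos
  rcases le_or_gt r (π / 2) with hr2 | hr2
  · refine le_trans ?_ (ofReal_sin_pow_mul_le_sphMeasure_cap hζ hr₀ hr2)
    gcongr
    calc r / π ≤ 2 / π * r := by rw [div_mul_eq_mul_div]; gcongr; linarith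
      _ ≤ sin r := Real.mul_le_sin hr₀.le hr2
  · refine le_trans ?_ ((ofReal_sin_pow_mul_le_sphMeasure_cap hζ (by positivity) le_rfl).trans
      (measure_mono fun x hx => ⟨hx.1, hx.2.trans hr2⟩))
    gcongr
    rw [Real.sin_pi_div_two]
    exact (div_le_one hπ).2 hr

lemma exists_sphMeasure_cap_le_mul (k : ℕ) :
    ∃ K : ℝ≥0∞, K ≠ 0 ∧ K ≠ ⊤ ∧ ∀ (ζ ζ' : EuclideanSpace ℝ (Fin (k + 1))) (r r' : ℝ),
      ‖ζ‖ = 1 → ‖ζ'‖ = 1 → 0 < r → 0 < r' → r' ≤ π →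
        sphMeasure (k + 1) (cap ζ r)
          ≤ K * ENNReal.ofReal ((r / r') ^ k) * sphMeasure (k + 1) (cap ζ' r') := by
  obtain ⟨B, hB0, hBtop, hB⟩ := exists_sphMeasure_cap_le k
  set V := μH[(k : ℝ)] (ball (0 : EuclideanSpace ℝ (Fin k)) 1)
  have hπ := Real.pi_pos
  refine ⟨B * ENNReal.ofReal (π ^ k) * V⁻¹, ?_, ?_, fun ζ ζ' r r' hζ hζ' hr hr' hr'π => ?_⟩
  · exact mul_ne_zero (mul_ne_zero hB0 (by simp; positivity))
      (ENNReal.inv_ne_zero.2 (measure_unitBall_ne_top k))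
  · exact ENNReal.mul_ne_top (ENNReal.mul_ne_top hBtop ENNReal.ofReal_ne_top)
      (ENNReal.inv_ne_top.2 (measure_unitBall_ne_zero k))
  have hsplit : r ^ k = π ^ k * (r / r') ^ k * (r' / π) ^ k := by
    rw [← mul_pow, ← mul_pow]; congr 1; field_simp
  calc sphMeasure (k + 1) (cap ζ r) ≤ B * ENNReal.ofReal (r ^ k) := hB ζ r hζ hr
    _ = B * ENNReal.ofReal (π ^ k) * V⁻¹ * ENNReal.ofReal ((r / r') ^ k)
          * (ENNReal.ofReal ((r' / π) ^ k) * V) := by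
        rw [hsplit, ENNReal.ofReal_mul (by positivity), ENNReal.ofReal_mul (by positivity)]
        calc _ = B * (ENNReal.ofReal (π ^ k) * ENNReal.ofReal ((r / r') ^ k)
              * ENNReal.ofReal ((r' / π) ^ k)) * (V⁻¹ * V) := by
                rw [ENNReal.inv_mul_cancel (measure_unitBall_ne_zero k)
                  (measure_unitBall_ne_top k), mul_one]
          _ = _ := by ring
    _ ≤ _ := by gcongr; exact ofReal_div_pi_pow_mul_le_sphMeasure_cap hζ' hr' hr'π

end CapMeasure

lemma card_le_of_dist_le_of_separated {E : Type*} [NormedAddCommGroup E] [NormedSpace ℝ E]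
    [FiniteDimensional ℝ E] (x : E) {r : ℝ} (hr : 0 < r) (s : Finset E)
    (hs : ∀ c ∈ s, dist c x ≤ 2 * r) (hsep : ∀ c ∈ s, ∀ c' ∈ s, c ≠ c' → r ≤ dist c c') :
    s.card ≤ 5 ^ finrank ℝ E := by
  have hinj : Function.Injective fun c : E => r⁻¹ • (c - x) := fun c c' h => by
    simpa [hr.ne'] using h
  rw [← Finset.card_map ⟨_, hinj⟩]
  refine Besicovitch.card_le_of_separated _ ?_ ?_
  · simp only [Finset.mem_map, Function.Embedding.coeFn_mk]
    rintro _ ⟨c, hc, rfl⟩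
    rw [norm_smul, norm_inv, Real.norm_of_nonneg hr.le, ← dist_eq_norm, inv_mul_le_iff₀ hr]
    linarith [hs c hc]
  · simp only [Finset.mem_map, Function.Embedding.coeFn_mk]
    rintro _ ⟨c, hc, rfl⟩ _ ⟨c', hc', rfl⟩ hne
    rw [← smul_sub, sub_sub_sub_cancel_right, norm_smul, norm_inv, Real.norm_of_nonneg hr.le,
      ← dist_eq_norm, le_inv_mul_iff₀ hr, mul_one]
    exact hsep c hc c' hc' fun h => hne (h ▸ rfl)

lemma card_le_of_geodist_lt_of_separated {d : ℕ} {x : EuclideanSpace ℝ (Fin d)} (hx : ‖x‖ = 1)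
    {r : ℝ} (hr : 0 < r) (T : Finset (EuclideanSpace ℝ (Fin d))) (hT₁ : ∀ c ∈ T, ‖c‖ = 1)
    (hT : ∀ c ∈ T, geodist c x < r) (hsep : ∀ c ∈ T, ∀ c' ∈ T, c ≠ c' → r ≤ geodist c c') :
    T.card ≤ 5 ^ d := by
  have hr2 : r / 2 ≤ 2 / π * r := by
    rw [div_mul_eq_mul_div, div_le_div_iff₀ two_pos Real.pi_pos]
    nlinarith [Real.pi_le_four]
  simpa using card_le_of_dist_le_of_separated x (half_pos hr) T
    (fun c hc => by linarith [dist_le_geodist (hT₁ c hc) hx, hT c hc])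
    fun c hc c' hc' hne => calc
      r / 2 ≤ 2 / π * r := hr2
      _ ≤ 2 / π * geodist c c' := by gcongr; exact hsep c hc c' hc' hne
      _ ≤ dist c c' := two_div_pi_mul_geodist_le_dist (hT₁ c hc) (hT₁ c' hc')

lemma sum_le_of_card_fiber_le_of_le_geometric {ι : Type*} (S : Finset ι) (g : ι → ℕ)
    (w : ι → ℝ≥0∞) {N C q w₀ : ℝ≥0∞} {J : ℕ}
    (hcard : ∀ j, ((S.filter fun b => g b = j).card : ℝ≥0∞) ≤ N) (hg : ∀ b ∈ S, g b ≤ J)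
    (hw : ∀ b ∈ S, w b ≤ C * q ^ (J - g b) * w₀) :
    ∑ b ∈ S, w b ≤ N * C * (1 - q)⁻¹ * w₀ := by
  calc ∑ b ∈ S, w b
      = ∑ j ∈ Finset.range (J + 1), ∑ b ∈ S.filter fun b => g b = j, w b :=
        (Finset.sum_fiberwise_of_maps_to
          (fun b hb => Finset.mem_range.2 (Nat.lt_succ_of_le (hg b hb))) w).symm
    _ ≤ ∑ j ∈ Finset.range (J + 1), ∑ _b ∈ S.filter fun b => g b = j, C * q ^ (J - j) * w₀ := by
        refine Finset.sum_le_sum fun j _ => Finset.sum_le_sum fun b hb => ?_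
        obtain ⟨hbS, rfl⟩ := Finset.mem_filter.1 hb
        exact hw b hbS
    _ ≤ ∑ j ∈ Finset.range (J + 1), N * (C * q ^ (J - j) * w₀) := by
        simp only [Finset.sum_const, nsmul_eq_mul]
        gcongr with j
        exact hcard j
    _ = N * C * w₀ * ∑ i ∈ Finset.range (J + 1), q ^ i := by
        rw [Finset.mul_sum, ← Finset.sum_range_reflect]
        refine Finset.sum_congr rfl fun i hi => ?_
        rw [Nat.add_sub_cancel, Nat.sub_sub_self (Nat.lt_succ_iff.1 (Finset.mem_range.1 hi))]
        ring
    _ ≤ N * C * w₀ * ∑' i, q ^ i := by gcongr; exact ENNReal.sum_le_tsum _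
    _ = N * C * (1 - q)⁻¹ * w₀ := by rw [ENNReal.tsum_geometric]; ring

lemma ENNReal.rpow_neg_le_mul_rpow_neg_of_le_mul {a b c : ℝ≥0∞} {s : ℝ} (hs : 0 ≤ s)
    (hc₀ : c ≠ 0) (hc : c ≠ ⊤) (h : a ≤ c * b) : b ^ (-s) ≤ c ^ s * a ^ (-s) := by
  have hcs₀ : c ^ s ≠ 0 := (ENNReal.rpow_pos (pos_iff_ne_zero.2 hc₀) hc).ne'
  have hcs : c ^ s ≠ ⊤ := ENNReal.rpow_ne_top_of_nonneg hs hc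
  rw [ENNReal.rpow_neg, ENNReal.rpow_neg]
  calc (b ^ s)⁻¹ = c ^ s * (c ^ s * b ^ s)⁻¹ := by
        rw [ENNReal.mul_inv (Or.inl hcs₀) (Or.inl hcs), ← mul_assoc,
          ENNReal.mul_inv_cancel hcs₀ hcs, one_mul]
    _ ≤ c ^ s * (a ^ s)⁻¹ := by
        gcongr
        rw [← ENNReal.mul_rpow_of_nonneg _ _ hs]
        exact ENNReal.rpow_le_rpow h hs

lemma lintegral_rpow_sum_indicator_le {α ι : Type*} [MeasurableSpace α] (μ : Measure α)
    {E : ι → Set α} {Y : Finset ι} {p : ℝ} (hp : 0 < p) {C : ℝ≥0∞}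
    (hE : ∀ b ∈ Y, MeasurableSet (E b))
    (hdom : ∀ x, ∀ b ∈ Y, x ∈ E b → ∃ b' ∈ Y, x ∈ E b' ∧
      ∑ b ∈ Y, μ (E b) ^ (-(1 / p)) * (E b).indicator (fun _ => 1) x ≤ C * μ (E b') ^ (-(1 / p))) :
    (∫⁻ x, (∑ b ∈ Y, μ (E b) ^ (-(1 / p)) * (E b).indicator (fun _ => 1) x) ^ p ∂μ) ^ (1 / p)
      ≤ C * (Y.card : ℝ≥0∞) ^ (1 / p) := by
  have hmeas : ∀ b ∈ Y, Measurable fun x => (μ (E b))⁻¹ * (E b).indicator (fun _ => (1 : ℝ≥0∞)) x :=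
    fun b hb => (measurable_const.indicator (hE b hb)).const_mul _
  have hpoint : ∀ x, (∑ b ∈ Y, μ (E b) ^ (-(1 / p)) * (E b).indicator (fun _ => 1) x) ^ p
      ≤ C ^ p * ∑ b ∈ Y, (μ (E b))⁻¹ * (E b).indicator (fun _ => 1) x := by
    intro x
    by_cases hx : ∃ b ∈ Y, x ∈ E b
    · obtain ⟨b, hb, hxb⟩ := hx
      obtain ⟨b', hb', hxb', hle⟩ := hdom x b hb hxb
      calc _ ≤ (C * μ (E b') ^ (-(1 / p))) ^ p := ENNReal.rpow_le_rpow hle hp.le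
        _ = C ^ p * (μ (E b'))⁻¹ := by
            rw [ENNReal.mul_rpow_of_nonneg _ _ hp.le, ← ENNReal.rpow_mul,
              show -(1 / p) * p = -1 by field_simp, ENNReal.rpow_neg_one]
        _ ≤ _ := by
            gcongr
            calc (μ (E b'))⁻¹ = (μ (E b'))⁻¹ * (E b').indicator (fun _ => 1) x := by simp [hxb']
              _ ≤ _ := Finset.single_le_sum
                (f := fun b => (μ (E b))⁻¹ * (E b).indicator (fun _ => 1) x)
                (fun _ _ => zero_le) hb'
    · simp only [not_exists, not_and] at hx
      rw [Finset.sum_eq_zero fun b hb => by simp [hx b hb], ENNReal.zero_rpow_of_pos hp]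
      exact zero_le
  have hint : ∫⁻ x, ∑ b ∈ Y, (μ (E b))⁻¹ * (E b).indicator (fun _ => 1) x ∂μ ≤ Y.card := by
    rw [lintegral_finsetSum _ hmeas]
    calc ∑ b ∈ Y, ∫⁻ x, (μ (E b))⁻¹ * (E b).indicator (fun _ => 1) x ∂μ
        = ∑ b ∈ Y, (μ (E b))⁻¹ * μ (E b) := Finset.sum_congr rfl fun b hb => by
          rw [lintegral_const_mul _ (measurable_const.indicator (hE b hb)),
            lintegral_indicator_const (hE b hb), one_mul]
      _ ≤ ∑ _b ∈ Y, 1 := Finset.sum_le_sum fun b _ => ENNReal.inv_mul_le_one _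
      _ = Y.card := by simp
  calc _ ≤ (C ^ p * Y.card) ^ (1 / p) := by
        refine ENNReal.rpow_le_rpow ?_ (by positivity)
        refine (lintegral_mono hpoint).trans ?_
        rw [lintegral_const_mul _ (Finset.measurable_sum _ hmeas)]
        gcongr
    _ = C * (Y.card : ℝ≥0∞) ^ (1 / p) := by
        rw [ENNReal.mul_rpow_of_nonneg _ _ (by positivity), ← ENNReal.rpow_mul,
          mul_one_div_cancel hp.ne', ENNReal.rpow_one]

section DyadicCaps

variable {k : ℕ} {γ : ℝ} {X : ℕ → Finset (EuclideanSpace ℝ (Fin (k + 1)))}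
  {Y : Finset (ℕ × EuclideanSpace ℝ (Fin (k + 1)))}

lemma dyadic_radius_div_dyadic_radius (hγ : γ ≠ 0) {i j : ℕ} (hij : i ≤ j) :
    γ * 2 ^ (-(j : ℝ) + 1) / (γ * 2 ^ (-(i : ℝ) + 1)) = (1 / 2) ^ (j - i) := by
  rw [mul_div_mul_left _ _ hγ, ← Real.rpow_sub two_pos,
    show -(j : ℝ) + 1 - (-(i : ℝ) + 1) = -((j - i : ℕ) : ℝ) by push_cast [Nat.cast_sub hij]; ring,
    Real.rpow_neg zero_le_two, Real.rpow_natCast, one_div, inv_pow]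

open Classical in
lemma card_filter_mem_cap_fst_eq_le (hγ : 0 < γ)
    (hX : ∀ j, ∀ η ∈ X j, η ∈ sphere (0 : EuclideanSpace ℝ (Fin (k + 1))) 1)
    (hsep : ∀ j, ∀ η₁ ∈ X j, ∀ η₂ ∈ X j, η₁ ≠ η₂ → γ * 2 ^ (-(j : ℝ) + 1) ≤ geodist η₁ η₂)
    (hYX : ∀ b ∈ Y, b.2 ∈ X b.1) {x : EuclideanSpace ℝ (Fin (k + 1))} (hx : ‖x‖ = 1) (j : ℕ) :
    (((Y.filter fun b : ℕ × EuclideanSpace ℝ (Fin (k + 1)) =>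
      x ∈ cap b.2 (γ * 2 ^ (-(b.1 : ℝ) + 1))).filter fun b => b.1 = j).card : ℝ≥0∞)
      ≤ 5 ^ (k + 1) := by
  set S := (Y.filter fun b => x ∈ cap b.2 (γ * 2 ^ (-(b.1 : ℝ) + 1))).filter
    fun b : ℕ × EuclideanSpace ℝ (Fin (k + 1)) => b.1 = j
  have hS : ∀ b ∈ S, b.2 ∈ X j ∧ x ∈ cap b.2 (γ * 2 ^ (-(j : ℝ) + 1)) := by
    intro b hb
    obtain ⟨⟨hbY, hxb⟩, rfl⟩ := And.imp_left Finset.mem_filter.1 (Finset.mem_filter.1 hb)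
    exact ⟨hYX b hbY, hxb⟩
  have hinj : Set.InjOn Prod.snd (S : Set (ℕ × EuclideanSpace ℝ (Fin (k + 1)))) :=
    fun b hb b' hb' h => Prod.ext
      ((Finset.mem_filter.1 hb).2.trans (Finset.mem_filter.1 hb').2.symm) h
  rw [← Finset.card_image_of_injOn hinj]
  have hmem : ∀ c ∈ S.image Prod.snd, c ∈ X j ∧ x ∈ cap c (γ * 2 ^ (-(j : ℝ) + 1)) := by
    simp only [Finset.mem_image]
    rintro _ ⟨b, hb, rfl⟩
    exact hS b hb
  exact_mod_cast card_le_of_geodist_lt_of_separated hx (by positivity) _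
    (fun c hc => mem_sphere_zero_iff_norm.1 (hX j c (hmem c hc).1))
    (fun c hc => (hmem c hc).2.2)
    fun c hc c' hc' hne => hsep j c (hmem c hc).1 c' (hmem c' hc').1 hne

lemma exists_mem_cap_sum_rpow_neg_le {p : ℝ} (hp : 0 < p) (hγ₀ : 0 < γ) (hγ₁ : γ < 1)
    {K : ℝ≥0∞} (hK₀ : K ≠ 0) (hK : K ≠ ⊤)
    (hcap : ∀ (ζ ζ' : EuclideanSpace ℝ (Fin (k + 1))) (r r' : ℝ), ‖ζ‖ = 1 → ‖ζ'‖ = 1 → 0 < r →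
      0 < r' → r' ≤ π →
        sphMeasure (k + 1) (cap ζ r)
          ≤ K * ENNReal.ofReal ((r / r') ^ k) * sphMeasure (k + 1) (cap ζ' r'))
    (hX : ∀ j, ∀ η ∈ X j, η ∈ sphere (0 : EuclideanSpace ℝ (Fin (k + 1))) 1)
    (hsep : ∀ j, ∀ η₁ ∈ X j, ∀ η₂ ∈ X j, η₁ ≠ η₂ → γ * 2 ^ (-(j : ℝ) + 1) ≤ geodist η₁ η₂)
    (hYX : ∀ b ∈ Y, b.2 ∈ X b.1) {x : EuclideanSpace ℝ (Fin (k + 1))}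
    {b₀ : ℕ × EuclideanSpace ℝ (Fin (k + 1))} (hb₀ : b₀ ∈ Y)
    (hx : x ∈ cap b₀.2 (γ * 2 ^ (-(b₀.1 : ℝ) + 1))) :
    ∃ b' ∈ Y, x ∈ cap b'.2 (γ * 2 ^ (-(b'.1 : ℝ) + 1)) ∧
      ∑ b ∈ Y, sphMeasure (k + 1) (cap b.2 (γ * 2 ^ (-(b.1 : ℝ) + 1))) ^ (-(1 / p)) *
          (cap b.2 (γ * 2 ^ (-(b.1 : ℝ) + 1))).indicator (fun _ => 1) x
        ≤ 5 ^ (k + 1) * K ^ (1 / p) * (1 - ENNReal.ofReal ((1 / 2) ^ k) ^ (1 / p))⁻¹ *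
          sphMeasure (k + 1) (cap b'.2 (γ * 2 ^ (-(b'.1 : ℝ) + 1))) ^ (-(1 / p)) := by
  classical
  set ρ : ℕ → ℝ := fun j => γ * 2 ^ (-(j : ℝ) + 1)
  have hρ : ∀ j, 0 < ρ j := fun j => by positivity
  have hρπ : ∀ j, ρ j ≤ π := fun j => by
    have : (2 : ℝ) ^ (-(j : ℝ) + 1) ≤ 2 ^ (1 : ℝ) :=
      Real.rpow_le_rpow_of_exponent_le one_le_two (by linarith [(j.cast_nonneg : (0 : ℝ) ≤ j)])
    rw [Real.rpow_one] at this
    nlinarith [Real.pi_gt_three]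
  have hnorm : ∀ b ∈ Y, ‖b.2‖ = 1 := fun b hb => mem_sphere_zero_iff_norm.1 (hX _ _ (hYX b hb))
  set S := Y.filter fun b => x ∈ cap b.2 (ρ b.1)
  -- the caps through `x` of the finest generation are the smallest ones, and dominate the sum
  obtain ⟨b', hb'S, hmax⟩ := S.exists_max_image Prod.fst ⟨b₀, Finset.mem_filter.2 ⟨hb₀, hx⟩⟩
  obtain ⟨hb'Y, hxb'⟩ := Finset.mem_filter.1 hb'S
  refine ⟨b', hb'Y, hxb', ?_⟩
  have hsum : ∑ b ∈ Y, sphMeasure (k + 1) (cap b.2 (ρ b.1)) ^ (-(1 / p)) *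
      (cap b.2 (ρ b.1)).indicator (fun _ => 1) x
        = ∑ b ∈ S, sphMeasure (k + 1) (cap b.2 (ρ b.1)) ^ (-(1 / p)) := by
    rw [Finset.sum_filter]
    refine Finset.sum_congr rfl fun b _ => ?_
    by_cases h : x ∈ cap b.2 (ρ b.1) <;> simp [h]
  rw [hsum]
  refine sum_le_of_card_fiber_le_of_le_geometric S Prod.fst _
    (card_filter_mem_cap_fst_eq_le hγ₀ hX hsep hYX (mem_sphere_zero_iff_norm.1 hx.1))
    hmax fun b hb => ?_
  obtain ⟨hbY, -⟩ := Finset.mem_filter.1 hb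
  have hθ : ENNReal.ofReal ((1 / 2) ^ k) ≠ 0 := (ENNReal.ofReal_pos.2 (by positivity)).ne'
  have hcmp := hcap b'.2 b.2 (ρ b'.1) (ρ b.1) (hnorm b' hb'Y) (hnorm b hbY) (hρ _) (hρ _) (hρπ _)
  rw [dyadic_radius_div_dyadic_radius hγ₀.ne' (hmax b hb), ← pow_mul, mul_comm _ k, pow_mul,
    ENNReal.ofReal_pow (by positivity)] at hcmp
  calc sphMeasure (k + 1) (cap b.2 (ρ b.1)) ^ (-(1 / p))
      ≤ (K * ENNReal.ofReal ((1 / 2) ^ k) ^ (b'.1 - b.1)) ^ (1 / p) *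
          sphMeasure (k + 1) (cap b'.2 (ρ b'.1)) ^ (-(1 / p)) :=
        ENNReal.rpow_neg_le_mul_rpow_neg_of_le_mul (by positivity)
          (mul_ne_zero hK₀ (pow_ne_zero _ hθ))
          (ENNReal.mul_ne_top hK (ENNReal.pow_ne_top ENNReal.ofReal_ne_top)) hcmp
    _ = K ^ (1 / p) * (ENNReal.ofReal ((1 / 2) ^ k) ^ (1 / p)) ^ (b'.1 - b.1) *
          sphMeasure (k + 1) (cap b'.2 (ρ b'.1)) ^ (-(1 / p)) := by
        rw [ENNReal.mul_rpow_of_nonneg _ _ (by positivity), ← ENNReal.rpow_natCast,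
          ← ENNReal.rpow_natCast, ← ENNReal.rpow_mul, ← ENNReal.rpow_mul, mul_comm (1 / p)]

end DyadicCaps

theorem stmt16 (d : ℕ) (hd : 2 ≤ d) (p : ℝ) (hp : 0 < p) :
    ∃ c > (0:ℝ), ∀ γ : ℝ, 0 < γ → γ < 1 →
      ∀ X : ℕ → Finset (EuclideanSpace ℝ (Fin d)),
        (∀ j : ℕ, ∀ η ∈ X j, η ∈ Metric.sphere (0 : EuclideanSpace ℝ (Fin d)) 1) →
        (∀ j : ℕ, ∀ η₁ ∈ X j, ∀ η₂ ∈ X j, η₁ ≠ η₂ →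
          γ * 2 ^ (-(j : ℝ) + 1) ≤ geodist η₁ η₂) →
        (∀ j : ℕ, ∀ x ∈ Metric.sphere (0 : EuclideanSpace ℝ (Fin d)) 1,
          ∃ η ∈ X j, geodist η x < γ * 2 ^ (-(j : ℝ) + 1)) →
        ∀ Y : Finset (ℕ × EuclideanSpace ℝ (Fin d)),
          (∀ b ∈ Y, b.2 ∈ X b.1) →
          (∀ b ∈ Y, 0 < sphMeasure d (cap b.2 (γ * 2 ^ (-(b.1 : ℝ) + 1)))) →
          (∫⁻ x in Metric.sphere (0 : EuclideanSpace ℝ (Fin d)) 1,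
              (∑ b ∈ Y,
                (sphMeasure d (cap b.2 (γ * 2 ^ (-(b.1 : ℝ) + 1)))) ^ (-(1 / p)) *
                  Set.indicator (cap b.2 (γ * 2 ^ (-(b.1 : ℝ) + 1)))
                    (fun _ => (1 : ℝ≥0∞)) x) ^ p
              ∂(sphMeasure d)) ^ (1 / p)
            ≤ ENNReal.ofReal c * (Y.card : ℝ≥0∞) ^ (1 / p) := by
  obtain ⟨k, rfl⟩ : ∃ k, d = k + 1 := ⟨d - 1, by omega⟩
  obtain ⟨K, hK₀, hK, hcap⟩ := exists_sphMeasure_cap_le_mul k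
  set q := ENNReal.ofReal ((1 / 2) ^ k) ^ (1 / p)
  have hq : q < 1 := ENNReal.rpow_lt_one
    (ENNReal.ofReal_lt_one.2 (pow_lt_one₀ (by norm_num) (by norm_num) (by omega)))
    (by positivity)
  set C := 5 ^ (k + 1) * K ^ (1 / p) * (1 - q)⁻¹
  have hC₀ : C ≠ 0 := mul_ne_zero (mul_ne_zero (by simp)
    (ENNReal.rpow_pos (pos_iff_ne_zero.2 hK₀) hK).ne') (ENNReal.inv_ne_zero.2 (by simp))
  have hC : C ≠ ⊤ := ENNReal.mul_ne_top (ENNReal.mul_ne_top (by simp)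
    (ENNReal.rpow_ne_top_of_nonneg (by positivity) hK))
    (ENNReal.inv_ne_top.2 (tsub_pos_of_lt hq).ne')
  refine ⟨C.toReal, ENNReal.toReal_pos hC₀ hC, fun γ hγ₀ hγ₁ X hX hsep _ Y hYX _ => ?_⟩
  rw [ENNReal.ofReal_toReal hC]
  refine (ENNReal.rpow_le_rpow (setLIntegral_le_lintegral _ _) (by positivity)).trans ?_
  exact lintegral_rpow_sum_indicator_le _ hp (fun b _ => measurableSet_cap _ _)
    fun x b₀ hb₀ hx => exists_mem_cap_sum_rpow_neg_le hp hγ₀ hγ₁ hK₀ hK hcap hX hsep hYX hb₀ hx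
end

section
/- Let d > 2, M > d−2, 0 < ε ≤ 1, a := 1+ε, and m := ⌈(M−d+2)/2⌉. Define F_ε(u) := ε^{2m−1}(a² + 1 − 2au)^{−d/2+1−m} for u ∈ [−1,1]. Then for all x, η on the unit sphere S^{d-1}: (i) F_ε(x·η) = ε^{2m−1} |x − aη|^{−d+2−2m}; (ii) 0 < F_ε(x·η) ≤ c₁ ε^{−d+1}/(1 + ε^{−1} ρ(x,η))^M, where c₁ depends only on m and d; and (iii) ∫_{S^{d-1}} F_ε(x·η) dσ(x) ≥ c₂ > 0 for a constant c₂ depending only on m and d. -/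
open MeasureTheory

/-- `F_ε(u) = ε^{2m−1} (a² + 1 − 2au)^{−d/2+1−m}` with `a = 1 + ε`. -/
noncomputable def Feps (d m : ℕ) (ε : ℝ) (u : ℝ) : ℝ :=
  ε ^ (2 * m - 1) *
    ((1 + ε) ^ 2 + 1 - 2 * (1 + ε) * u) ^ (-(d : ℝ) / 2 + 1 - (m : ℝ))

/-!
On the unit sphere the base of `Feps` is `|x - aη|² = ε² + 2a(1 - x·η)`, so
`F_ε(x·η) = ε^{1-d} (|x - aη|/ε)^{-(d-2+2m)}`. Upper bound: `1 - cos ρ ≥ 2ρ²/π²` gives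
`|x - aη| ≥ (ε + ρ)/π`, and `d - 2 + 2m ≥ M`. Lower bound: `|x - aη|² ≤ 2ε²` on the cap
`x·η ≥ 1 - ε²/4`, so `F_ε ≥ c ε^{1-d}` there. The orthogonal projection onto `η^⊥` is
1-Lipschitz, and its image of the cap contains the `(d-1)`-ball of radius `ε/2`. The identity
from the Euclidean to the sup norm is 1-Lipschitz too, and for the sup norm `μH` is Lebesgue
measure, so the ball, hence the cap, has `μH[d-1]` at least the volume `(ε/√(d-1))^{d-1}` of an
inscribed cube.
-/

open Metric Real

section Feps

variable {d m : ℕ} {ε u : ℝ}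

lemma norm_sub_smul_sq_of_norm_eq_one {E : Type*} [NormedAddCommGroup E]
    [InnerProductSpace ℝ E] {x η : E} (hx : ‖x‖ = 1) (hη : ‖η‖ = 1) (a : ℝ) :
    ‖x - a • η‖ ^ 2 = a ^ 2 + 1 - 2 * a * inner ℝ x η := by
  rw [norm_sub_sq_real, norm_smul, real_inner_smul_right, hx, hη, Real.norm_eq_abs, mul_one,
    sq_abs]
  ring

lemma Feps_inner_eq {E : Type*} [NormedAddCommGroup E] [InnerProductSpace ℝ E]
    {x η : E} (hx : ‖x‖ = 1) (hη : ‖η‖ = 1) (d m : ℕ) (ε : ℝ) :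
    Feps d m ε (inner ℝ x η) =
      ε ^ (2 * m - 1) * ‖x - (1 + ε) • η‖ ^ (-(d : ℝ) + 2 - 2 * m) := by
  rw [Feps, ← norm_sub_smul_sq_of_norm_eq_one hx hη, ← rpow_natCast_mul (norm_nonneg _)]
  ring_nf

lemma Feps_pos (hε : 0 < ε) (hu : u ≤ 1) : 0 < Feps d m ε u := by
  unfold Feps
  have : 0 < (1 + ε) ^ 2 + 1 - 2 * (1 + ε) * u := by nlinarith
  positivity

lemma Feps_exponent_nonpos (hm : 1 ≤ m) : -(d : ℝ) / 2 + 1 - m ≤ 0 := by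
  linarith [(m.one_le_cast (α := ℝ)).mpr hm, d.cast_nonneg (α := ℝ)]

lemma Feps_eq_rpow_mul_rpow (hm : 1 ≤ m) (hε : 0 < ε) (hu : u ≤ 1) :
    Feps d m ε u = ε ^ (-(d : ℝ) + 1) *
      (((1 + ε) ^ 2 + 1 - 2 * (1 + ε) * u) / ε ^ 2) ^ (-(d : ℝ) / 2 + 1 - m) := by
  have hQ : 0 ≤ (1 + ε) ^ 2 + 1 - 2 * (1 + ε) * u := by nlinarith
  have hexp : ε ^ (2 * m - 1) * (ε ^ 2) ^ (-(d : ℝ) / 2 + 1 - m) = ε ^ (-(d : ℝ) + 1) := by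
    rw [← rpow_natCast_mul hε.le, ← rpow_natCast ε (2 * m - 1), ← rpow_add hε,
      Nat.cast_sub (by omega)]
    push_cast
    ring_nf
  rw [Feps, div_rpow hQ (by positivity), ← hexp]
  field_simp

lemma Feps_le_of_sq_le (hm : 1 ≤ m) (hε : 0 < ε) (hu : u ≤ 1) {t : ℝ} (ht : 0 < t)
    (h : t ^ 2 ≤ ((1 + ε) ^ 2 + 1 - 2 * (1 + ε) * u) / ε ^ 2) :
    Feps d m ε u ≤ ε ^ (-(d : ℝ) + 1) * t ^ (-(d : ℝ) + 2 - 2 * m) := by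
  rw [Feps_eq_rpow_mul_rpow hm hε hu]
  gcongr
  calc _ ≤ (t ^ 2) ^ (-(d : ℝ) / 2 + 1 - m) :=
        rpow_le_rpow_of_nonpos (by positivity) h (Feps_exponent_nonpos hm)
    _ = _ := by rw [← rpow_natCast_mul ht.le]; ring_nf

lemma le_Feps_of_le_sq (hm : 1 ≤ m) (hε : 0 < ε) (hu : u ≤ 1) {t : ℝ} (ht : 0 ≤ t)
    (h : ((1 + ε) ^ 2 + 1 - 2 * (1 + ε) * u) / ε ^ 2 ≤ t ^ 2) :
    ε ^ (-(d : ℝ) + 1) * t ^ (-(d : ℝ) + 2 - 2 * m) ≤ Feps d m ε u := by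
  rw [Feps_eq_rpow_mul_rpow hm hε hu]
  have hQ : 0 < ((1 + ε) ^ 2 + 1 - 2 * (1 + ε) * u) / ε ^ 2 := by
    have : 0 < (1 + ε) ^ 2 + 1 - 2 * (1 + ε) * u := by nlinarith
    positivity
  gcongr
  calc t ^ (-(d : ℝ) + 2 - 2 * m) = (t ^ 2) ^ (-(d : ℝ) / 2 + 1 - m) := by
        rw [← rpow_natCast_mul ht]; ring_nf
    _ ≤ _ := rpow_le_rpow_of_nonpos hQ h (Feps_exponent_nonpos hm)

lemma sq_add_arccos_div_pi_le (hε : 0 ≤ ε) (hu₁ : -1 ≤ u) (hu₂ : u ≤ 1) :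
    ((ε + arccos u) / π) ^ 2 ≤ (1 + ε) ^ 2 + 1 - 2 * (1 + ε) * u := by
  set ρ := arccos u
  have hcos : u ≤ 1 - 2 / π ^ 2 * ρ ^ 2 := by
    rw [← cos_arccos hu₁ hu₂]
    exact cos_le_one_sub_mul_cos_sq (abs_le.mpr ⟨by linarith [arccos_nonneg u, pi_pos],
      arccos_le_pi u⟩)
  have hπ : 9 ≤ π ^ 2 := by nlinarith [pi_gt_three]
  rw [div_pow, div_le_iff₀ (by positivity)]
  have : 2 * ρ ^ 2 ≤ π ^ 2 * (1 - u) := by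
    have := mul_le_mul_of_nonneg_left hcos (sq_nonneg π)
    field_simp at this
    linarith
  nlinarith [sq_nonneg (ε - ρ), mul_le_mul_of_nonneg_left hπ (sq_nonneg ε),
    mul_nonneg (mul_nonneg hε (sq_nonneg π)) (by linarith : 0 ≤ 1 - u)]

lemma Feps_le_mul_div_one_add_arccos (hm : 1 ≤ m) {M : ℝ} (hM : M ≤ d - 2 + 2 * m)
    (hε : 0 < ε) (hu₁ : -1 ≤ u) (hu₂ : u ≤ 1) :
    Feps d m ε u ≤
      π ^ ((d : ℝ) - 2 + 2 * m) * ε ^ (-(d : ℝ) + 1) / (1 + ε⁻¹ * arccos u) ^ M := by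
  set z := 1 + ε⁻¹ * arccos u
  have hz : 1 ≤ z := le_add_of_nonneg_right (by have := arccos_nonneg u; positivity)
  have hsq : (z / π) ^ 2 ≤ ((1 + ε) ^ 2 + 1 - 2 * (1 + ε) * u) / ε ^ 2 := by
    rw [le_div_iff₀ (by positivity), ← mul_pow, div_mul_eq_mul_div, add_mul, one_mul,
      mul_comm ε⁻¹, inv_mul_cancel_right₀ hε.ne']
    exact sq_add_arccos_div_pi_le hε.le hu₁ hu₂
  calc Feps d m ε u ≤ ε ^ (-(d : ℝ) + 1) * (z / π) ^ (-(d : ℝ) + 2 - 2 * m) :=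
        Feps_le_of_sq_le hm hε hu₂ (by positivity) hsq
    _ = π ^ ((d : ℝ) - 2 + 2 * m) * ε ^ (-(d : ℝ) + 1) * z ^ (-((d : ℝ) - 2 + 2 * m)) := by
        rw [div_rpow (by positivity) pi_pos.le, div_eq_mul_inv, ← rpow_neg pi_pos.le]
        ring_nf
    _ ≤ π ^ ((d : ℝ) - 2 + 2 * m) * ε ^ (-(d : ℝ) + 1) * z ^ (-M) := by
        gcongr
    _ = _ := by rw [rpow_neg (by positivity), div_eq_mul_inv]

lemma le_Feps_of_one_sub_sq_le (hm : 1 ≤ m) (hε : 0 < ε) (hε₁ : ε ≤ 1) (hu₂ : u ≤ 1)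
    (hu : 1 - (ε / 2) ^ 2 ≤ u) :
    ε ^ (-(d : ℝ) + 1) * √2 ^ (-(d : ℝ) + 2 - 2 * m) ≤ Feps d m ε u := by
  refine le_Feps_of_le_sq hm hε hu₂ (by positivity) ?_
  rw [sq_sqrt zero_le_two, div_le_iff₀ (by positivity)]
  nlinarith

end Feps

lemma closedBall_div_sqrt_subset_image_ofLp (n : ℕ) {r : ℝ} (hr : 0 ≤ r) :
    closedBall (0 : Fin n → ℝ) (r / √n) ⊆
      WithLp.ofLp '' closedBall (0 : EuclideanSpace ℝ (Fin n)) r := by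
  intro w hw
  refine ⟨WithLp.toLp 2 w, ?_, rfl⟩
  rw [mem_closedBall_zero_iff] at hw ⊢
  have hlip := (PiLp.lipschitzWith_toLp 2 (fun _ : Fin n => ℝ)).dist_le_mul w 0
  simp only [dist_zero_right, Fintype.card_fin, WithLp.toLp_zero] at hlip
  calc ‖WithLp.toLp 2 w‖ ≤ √n * ‖w‖ := by simpa [sqrt_eq_rpow] using hlip
    _ ≤ √n * (r / √n) := by gcongr
    _ ≤ r := by
      rcases n.eq_zero_or_pos with rfl | hn
      · simpa using hr
      · rw [mul_div_cancel₀ _ (by positivity)]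

lemma ofReal_le_hausdorffMeasure_closedBall (n : ℕ) {r : ℝ} (hr : 0 ≤ r) :
    ENNReal.ofReal ((2 * (r / √n)) ^ n) ≤
      μH[n] (closedBall (0 : EuclideanSpace ℝ (Fin n)) r) := by
  have hvol : (μH[n] : Measure (Fin n → ℝ)) = volume := by
    simpa using hausdorffMeasure_pi_real (ι := Fin n)
  calc ENNReal.ofReal ((2 * (r / √n)) ^ n)
      = μH[n] (closedBall (0 : Fin n → ℝ) (r / √n)) := by
        rw [hvol, Real.volume_pi_closedBall _ (by positivity), Fintype.card_fin]
    _ ≤ μH[n] (WithLp.ofLp '' closedBall (0 : EuclideanSpace ℝ (Fin n)) r) :=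
        measure_mono (closedBall_div_sqrt_subset_image_ofLp n hr)
    _ ≤ μH[n] (closedBall (0 : EuclideanSpace ℝ (Fin n)) r) := by
        simpa using LipschitzWith.hausdorffMeasure_image_le
          (PiLp.lipschitzWith_ofLp 2 (fun _ : Fin n => ℝ)) n.cast_nonneg _

section Sphere

variable {E : Type*} [NormedAddCommGroup E] [InnerProductSpace ℝ E] {η v : E}

lemma inner_smul_add_left_of_inner_eq_zero (hη : ‖η‖ = 1) (hv : inner ℝ v η = 0) (a : ℝ) :
    inner ℝ (a • η + v) η = a := by
  rw [inner_add_left, real_inner_smul_left, hv, real_inner_self_eq_norm_sq, hη]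
  ring

lemma norm_sqrt_one_sub_sq_smul_add (hη : ‖η‖ = 1) (hv : inner ℝ v η = 0) (hv₁ : ‖v‖ ≤ 1) :
    ‖√(1 - ‖v‖ ^ 2) • η + v‖ = 1 := by
  have hsq : 0 ≤ 1 - ‖v‖ ^ 2 := by nlinarith [norm_nonneg v]
  rw [← pow_eq_one_iff_of_nonneg (norm_nonneg _) two_ne_zero, norm_add_sq_real,
    real_inner_smul_left, real_inner_comm, hv, norm_smul, hη, norm_eq_abs,
    abs_of_nonneg (sqrt_nonneg _), mul_one, sq_sqrt hsq]
  ring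

lemma ofReal_le_hausdorffMeasure_sphere_inter {n : ℕ} (hn : Module.finrank ℝ E = n + 1)
    [MeasurableSpace E] [BorelSpace E] (hη : ‖η‖ = 1) {r : ℝ} (hr₀ : 0 ≤ r) (hr₁ : r ≤ 1) :
    ENNReal.ofReal ((2 * (r / √n)) ^ n) ≤
      μH[n] (sphere (0 : E) 1 ∩ {x | 1 - r ^ 2 ≤ inner ℝ x η}) := by
  have : FiniteDimensional ℝ E := Module.finite_of_finrank_pos (by omega)
  set K := (ℝ ∙ η)ᗮ
  have : Fact (Module.finrank ℝ E = n + 1) := ⟨hn⟩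
  have hK : Module.finrank ℝ K = n :=
    Submodule.finrank_orthogonal_span_singleton (by rintro rfl; simp at hη)
  let e : K ≃ₗᵢ[ℝ] EuclideanSpace ℝ (Fin n) :=
    ((stdOrthonormalBasis ℝ K).reindex (finCongr hK)).repr
  let f : E → EuclideanSpace ℝ (Fin n) := e ∘ K.orthogonalProjectionOnto
  have hf : LipschitzWith 1 f := by
    simpa using e.isometry.lipschitz.comp
      (ContinuousLinearMap.lipschitzWith_of_opNorm_le (by
        simpa using K.orthogonalProjectionOnto_norm_le))
  have hsub : closedBall 0 r ⊆ f '' (sphere (0 : E) 1 ∩ {x | 1 - r ^ 2 ≤ inner ℝ x η}) := by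
    intro w hw
    set v : K := e.symm w
    have hvη : inner ℝ (v : E) η = 0 :=
      Submodule.mem_orthogonal_singleton_iff_inner_left.mp v.2
    have hvr : ‖(v : E)‖ ≤ r := (e.symm.norm_map w).trans_le (mem_closedBall_zero_iff.mp hw)
    refine ⟨√(1 - ‖(v : E)‖ ^ 2) • η + v, ⟨?_, ?_⟩, ?_⟩
    · simpa using norm_sqrt_one_sub_sq_smul_add hη hvη (hvr.trans hr₁)
    · rw [Set.mem_ofPred_eq, inner_smul_add_left_of_inner_eq_zero hη hvη]
      have hvr₂ : ‖(v : E)‖ ^ 2 ≤ r ^ 2 := pow_le_pow_left₀ (norm_nonneg _) hvr 2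
      have hr : (1 - r ^ 2) ^ 2 ≤ 1 - ‖(v : E)‖ ^ 2 := by nlinarith [mul_le_one₀ hr₁ hr₀ hr₁]
      exact (le_abs_self _).trans (abs_le_sqrt hr)
    · simp [f, v, K, Submodule.orthogonalProjectionOnto_orthogonalComplement_singleton_eq_zero]
  calc ENNReal.ofReal ((2 * (r / √n)) ^ n) ≤ μH[n] (closedBall 0 r) :=
        ofReal_le_hausdorffMeasure_closedBall n hr₀
    _ ≤ μH[n] (f '' (sphere (0 : E) 1 ∩ {x | 1 - r ^ 2 ≤ inner ℝ x η})) := measure_mono hsub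
    _ ≤ _ := by simpa using hf.hausdorffMeasure_image_le n.cast_nonneg _

lemma exists_pos_le_lintegral_sphere_Feps [MeasurableSpace E] [BorelSpace E] {d m : ℕ}
    (hE : Module.finrank ℝ E = d) (hd : 1 < d) (hm : 1 ≤ m) :
    ∃ c > 0, ∀ ε : ℝ, 0 < ε → ε ≤ 1 → ∀ η : E, ‖η‖ = 1 →
      ENNReal.ofReal c ≤ ∫⁻ x in sphere (0 : E) 1,
        ENNReal.ofReal (Feps d m ε (inner ℝ x η)) ∂μH[(d : ℝ) - 1] := by
  obtain ⟨n, rfl⟩ : ∃ n, d = n + 1 := ⟨d - 1, by omega⟩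
  have hn : (0 : ℝ) < n := by exact_mod_cast Nat.lt_of_succ_lt_succ hd
  set p : ℝ := -((n + 1 : ℕ) : ℝ) + 2 - 2 * m
  refine ⟨√2 ^ p / √n ^ n, by positivity, fun ε hε hε₁ η hη => ?_⟩
  set cap := sphere (0 : E) 1 ∩ {x | 1 - (ε / 2) ^ 2 ≤ inner ℝ x η}
  have hcap : MeasurableSet cap :=
    isClosed_sphere.measurableSet.inter
      (isClosed_le continuous_const (continuous_id.inner continuous_const)).measurableSet
  have hlow : ∀ x ∈ cap, ENNReal.ofReal (ε ^ (-((n + 1 : ℕ) : ℝ) + 1) * √2 ^ p) ≤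
      ENNReal.ofReal (Feps (n + 1) m ε (inner ℝ x η)) := by
    rintro x ⟨hx, hxη⟩
    refine ENNReal.ofReal_le_ofReal (le_Feps_of_one_sub_sq_le hm hε hε₁ ?_ hxη)
    simpa [mem_sphere_zero_iff_norm.mp hx, hη] using real_inner_le_norm x η
  have hc : √2 ^ p / √n ^ n =
      ε ^ (-((n + 1 : ℕ) : ℝ) + 1) * √2 ^ p * (2 * (ε / 2 / √n)) ^ n := by
    have : ε ^ (-((n + 1 : ℕ) : ℝ) + 1) = (ε ^ n)⁻¹ := by
      rw [← rpow_natCast, ← rpow_neg hε.le]; push_cast; ring_nf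
    rw [this, show 2 * (ε / 2 / √n) = ε / √n by ring, div_pow]
    field_simp
  rw [show ((n + 1 : ℕ) : ℝ) - 1 = n by push_cast; ring, hc, ENNReal.ofReal_mul (by positivity)]
  calc _ ≤ ENNReal.ofReal (ε ^ (-((n + 1 : ℕ) : ℝ) + 1) * √2 ^ p) * μH[n] cap := by
        gcongr
        exact ofReal_le_hausdorffMeasure_sphere_inter (by rw [hE]) hη (by positivity)
          (by linarith)
    _ = ∫⁻ _ in cap, ENNReal.ofReal (ε ^ (-((n + 1 : ℕ) : ℝ) + 1) * √2 ^ p) ∂μH[n] :=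
        (setLIntegral_const _ _).symm
    _ ≤ ∫⁻ x in cap, ENNReal.ofReal (Feps (n + 1) m ε (inner ℝ x η)) ∂μH[n] :=
        setLIntegral_mono' hcap hlow
    _ ≤ _ := lintegral_mono_set Set.inter_subset_left

end Sphere

theorem stmt19 (d : ℕ) (hd : 2 < d) (M : ℝ) (hM : (d : ℝ) - 2 < M) :
    ∃ c₁ > (0:ℝ), ∃ c₂ > (0:ℝ), ∀ ε : ℝ, 0 < ε → ε ≤ 1 →
      (∀ x ∈ Metric.sphere (0 : EuclideanSpace ℝ (Fin d)) 1,
        ∀ η ∈ Metric.sphere (0 : EuclideanSpace ℝ (Fin d)) 1,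
          -- (i)
          Feps d ⌈(M - (d : ℝ) + 2) / 2⌉₊ ε (inner ℝ x η : ℝ)
              = ε ^ (2 * ⌈(M - (d : ℝ) + 2) / 2⌉₊ - 1) *
                  ‖x - (1 + ε) • η‖ ^
                    (-(d : ℝ) + 2 - 2 * (⌈(M - (d : ℝ) + 2) / 2⌉₊ : ℝ)) ∧
          -- (ii)
          0 < Feps d ⌈(M - (d : ℝ) + 2) / 2⌉₊ ε (inner ℝ x η : ℝ) ∧
          Feps d ⌈(M - (d : ℝ) + 2) / 2⌉₊ ε (inner ℝ x η : ℝ)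
              ≤ c₁ * ε ^ (-(d : ℝ) + 1) / (1 + ε⁻¹ * geodist x η) ^ M) ∧
      -- (iii)
      (∀ η ∈ Metric.sphere (0 : EuclideanSpace ℝ (Fin d)) 1,
        ENNReal.ofReal c₂ ≤
          ∫⁻ x in Metric.sphere (0 : EuclideanSpace ℝ (Fin d)) 1,
            ENNReal.ofReal (Feps d ⌈(M - (d : ℝ) + 2) / 2⌉₊ ε (inner ℝ x η : ℝ))
            ∂(Measure.hausdorffMeasure ((d : ℝ) - 1))) := by
  set m := ⌈(M - (d : ℝ) + 2) / 2⌉₊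
  have hm : 1 ≤ m := Nat.ceil_pos.mpr (by linarith)
  have hMm : M ≤ d - 2 + 2 * m := by linarith [Nat.le_ceil ((M - (d : ℝ) + 2) / 2)]
  obtain ⟨c₂, hc₂, hlow⟩ := exists_pos_le_lintegral_sphere_Feps
    (E := EuclideanSpace ℝ (Fin d)) (finrank_euclideanSpace_fin) (by omega) hm
  refine ⟨π ^ ((d : ℝ) - 2 + 2 * m), by positivity, c₂, hc₂, fun ε hε hε₁ => ⟨?_, ?_⟩⟩
  · intro x hx η hη
    rw [mem_sphere_zero_iff_norm] at hx hη
    obtain ⟨hu₁, hu₂⟩ := abs_le.mp (by simpa [hx, hη] using abs_real_inner_le_norm x η)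
    exact ⟨Feps_inner_eq hx hη d m ε, Feps_pos hε hu₂,
      Feps_le_mul_div_one_add_arccos hm hMm hε hu₁ hu₂⟩
  · intro η hη
    exact hlow ε hε hε₁ η (mem_sphere_zero_iff_norm.mp hη)
end
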